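/- arXiv:alg-geom/9706007 — 3 statements merged into one kernel-verified Lean document; each statement's English description precedes it below -/
import Mathlib

section
/- Let L be a discrete subspace of V and define the index of L (relative to a fixed open subspace V⁺ commensurable with F) as i(L) = dim_k(L ∩ V⁺) − dim_k(V/(L + V⁺)). If V⁺ and W⁺ are two open subspaces commensurable with each other, then the two indices differ by the constant dim_k(W⁺/(V⁺∩W⁺)) − dim_k(V⁺/(V⁺∩W⁺)), independently of L. -/
open Module Submodule LinearMap


/-- Two subspaces `A`, `B` of a `k`-vector space `V` are *commensurable* if
`(A + B)/(A ∩ B)` is a finite-dimensional `k`-vector space. -/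
def SubspaceCommensurable {k V : Type*} [Field k] [AddCommGroup V] [Module k V]
    (A B : Submodule k V) : Prop :=
  FiniteDimensional k (↥(A ⊔ B) ⧸ Submodule.comap (A ⊔ B).subtype (A ⊓ B))

section Aux

variable {k V : Type*} [Field k] [AddCommGroup V] [Module k V]

/-- Extension of finite-dimensional by finite-dimensional is finite-dimensional. -/
lemma aux_fd_ext (p : Submodule k V) (h1 : FiniteDimensional k p)
    (h2 : FiniteDimensional k (V ⧸ p)) : FiniteDimensional k V := by
  have r1 : Module.rank k ↥p < Cardinal.aleph0 := Module.rank_lt_aleph0_iff.mpr h1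
  have r2 : Module.rank k (V ⧸ p) < Cardinal.aleph0 := Module.rank_lt_aleph0_iff.mpr h2
  have h := rank_quotient_add_rank_of_divisionRing p
  exact Module.rank_lt_aleph0_iff.mp (h ▸ Cardinal.add_lt_aleph0 r2 r1)

/-- Quotient by a larger submodule is finite-dimensional. -/
lemma aux_fd_quot_mono {p q : Submodule k V} (h : p ≤ q)
    (hp : FiniteDimensional k (V ⧸ p)) : FiniteDimensional k (V ⧸ q) := by
  refine Module.Finite.of_surjective (Submodule.mapQ p q LinearMap.id h) ?_
  intro x
  obtain ⟨y, rfl⟩ := q.mkQ_surjective x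
  exact ⟨p.mkQ y, by simp [Submodule.mapQ_apply]⟩

lemma aux_ker_comp (U W : Submodule k V) :
    LinearMap.ker (W.mkQ ∘ₗ U.subtype) = Submodule.comap U.subtype W := by
  ext x
  simp [LinearMap.mem_ker, Submodule.Quotient.mk_eq_zero]

/-- Finiteness of `V ⧸ (L ⊔ U)` given finiteness of `Vp ⧸ U` and `V ⧸ (L ⊔ Vp)`. -/
lemma aux_fd_quot_sup (U Vp L : Submodule k V) (hUV : U ≤ Vp)
    (hfin : FiniteDimensional k (↥Vp ⧸ Submodule.comap Vp.subtype U))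
    (h2 : FiniteDimensional k (V ⧸ (L ⊔ Vp))) :
    FiniteDimensional k (V ⧸ (L ⊔ U)) := by
  set f : ↥Vp →ₗ[k] V ⧸ (L ⊔ U) := (L ⊔ U).mkQ ∘ₗ Vp.subtype with hf
  have hker : LinearMap.ker f = Submodule.comap Vp.subtype (L ⊔ U) := aux_ker_comp _ _
  have hle : Submodule.comap Vp.subtype U ≤ LinearMap.ker f := by
    rw [hker]; exact Submodule.comap_mono le_sup_right
  have hS : FiniteDimensional k ↥(LinearMap.range f) := by
    haveI := aux_fd_quot_mono hle hfin
    exact Module.Finite.equiv f.quotKerEquivRange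
  have hQ : FiniteDimensional k ((V ⧸ (L ⊔ U)) ⧸ LinearMap.range f) := by
    have hr : LinearMap.range f = Submodule.map (L ⊔ U).mkQ Vp := by
      rw [hf, LinearMap.range_comp, Submodule.range_subtype]
    have e := Submodule.quotientQuotientEquivQuotientSup (L ⊔ U) Vp
    have heq : (L ⊔ U) ⊔ Vp = L ⊔ Vp := by
      rw [sup_assoc, sup_eq_right.mpr hUV]
    haveI := h2
    have e2 : ((V ⧸ (L ⊔ U)) ⧸ LinearMap.range f) ≃ₗ[k] V ⧸ (L ⊔ Vp) :=
      Submodule.quotEquivOfEq _ _ hr ≪≫ₗ e ≪≫ₗ Submodule.quotEquivOfEq _ _ heq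
    exact Module.Finite.equiv e2.symm
  exact aux_fd_ext (LinearMap.range f) hS hQ

end Aux

lemma aux_core {k V : Type*} [Field k] [AddCommGroup V] [Module k V]
    (U Vp L : Submodule k V) (hUV : U ≤ Vp)
    (hfin : FiniteDimensional k (↥Vp ⧸ Submodule.comap Vp.subtype U))
    (h1 : FiniteDimensional k ↥(L ⊓ Vp))
    (h2 : FiniteDimensional k (V ⧸ (L ⊔ Vp)))
    (h1' : FiniteDimensional k ↥(L ⊓ U))
    (h2' : FiniteDimensional k (V ⧸ (L ⊔ U))) :
    ((Module.finrank k ↥(L ⊓ Vp) : ℤ) - Module.finrank k (V ⧸ (L ⊔ Vp)))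
      - ((Module.finrank k ↥(L ⊓ U) : ℤ) - Module.finrank k (V ⧸ (L ⊔ U)))
    = (Module.finrank k (↥Vp ⧸ Submodule.comap Vp.subtype U) : ℤ) := by
  haveI := hfin; haveI := h1; haveI := h2; haveI := h1'; haveI := h2'
  set U' : Submodule k ↥Vp := Submodule.comap Vp.subtype U with hU'
  set C : Submodule k ↥Vp := Submodule.comap Vp.subtype (L ⊓ Vp) with hC
  set W' : Submodule k ↥Vp := Submodule.comap Vp.subtype (L ⊔ U) with hW'
  set f : ↥Vp →ₗ[k] V ⧸ (L ⊔ U) := (L ⊔ U).mkQ ∘ₗ Vp.subtype with hf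
  set g : ↥(L ⊓ Vp) →ₗ[k] (↥Vp ⧸ U') :=
    U'.mkQ ∘ₗ Submodule.inclusion (inf_le_right : L ⊓ Vp ≤ Vp) with hg
  -- kernels
  have hkerf : LinearMap.ker f = W' := aux_ker_comp _ _
  have hkerg : LinearMap.ker g = Submodule.comap (L ⊓ Vp).subtype (L ⊓ U) := by
    ext x
    simp only [hg, LinearMap.mem_ker, LinearMap.comp_apply, Submodule.mkQ_apply,
      Submodule.Quotient.mk_eq_zero, hU', Submodule.mem_comap, Submodule.coe_inclusion,
      Submodule.coe_subtype, Submodule.mem_inf]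
    exact ⟨fun h => ⟨x.2.1, h⟩, fun h => h.2⟩
  -- ranges
  have hrangeg : LinearMap.range g = Submodule.map U'.mkQ C := by
    rw [hg, LinearMap.range_comp, Submodule.range_inclusion]
  have hrangef : LinearMap.range f = Submodule.map (L ⊔ U).mkQ Vp := by
    rw [hf, LinearMap.range_comp, Submodule.range_subtype]
  -- modular-law style identity : W' = C ⊔ U'
  have hWsup : W' = C ⊔ U' := by
    ext x
    constructor
    · intro hx
      obtain ⟨l, hl, u, hu, hx⟩ := Submodule.mem_sup.mp hx
      have hx' : l + u = (x : V) := hx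
      have hlVp : l ∈ Vp := by
        have h' : (x : V) - u ∈ Vp := sub_mem x.2 (hUV hu)
        rwa [← hx', add_sub_cancel_right] at h'
      exact Submodule.mem_sup.mpr
        ⟨⟨l, hlVp⟩, ⟨hl, hlVp⟩, ⟨u, hUV hu⟩, hu, Subtype.ext hx⟩
    · intro hx
      obtain ⟨y, hy, z, hz, rfl⟩ := Submodule.mem_sup.mp hx
      exact add_mem (Submodule.mem_sup_left hy.1) (Submodule.mem_sup_right hz)
  have hUW' : U' ≤ W' := Submodule.comap_mono le_sup_right
  have hmap : Submodule.map U'.mkQ W' = LinearMap.range g := by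
    rw [hrangeg, hWsup, Submodule.map_sup, Submodule.mkQ_map_self, sup_bot_eq]
  -- equivalences
  have e3 : ((↥Vp ⧸ U') ⧸ LinearMap.range g) ≃ₗ[k] ↥(LinearMap.range f) :=
    Submodule.quotEquivOfEq _ _ hmap.symm ≪≫ₗ
      Submodule.quotientQuotientEquivQuotient U' W' hUW' ≪≫ₗ
      Submodule.quotEquivOfEq _ _ hkerf.symm ≪≫ₗ f.quotKerEquivRange
  have e2 : ((V ⧸ (L ⊔ U)) ⧸ LinearMap.range f) ≃ₗ[k] V ⧸ (L ⊔ Vp) :=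
    Submodule.quotEquivOfEq _ _ hrangef ≪≫ₗ
      Submodule.quotientQuotientEquivQuotientSup (L ⊔ U) Vp ≪≫ₗ
      Submodule.quotEquivOfEq _ _ (by rw [sup_assoc, sup_eq_right.mpr hUV])
  have ekg : ↥(LinearMap.ker g) ≃ₗ[k] ↥(L ⊓ U) :=
    LinearEquiv.ofEq _ _ hkerg ≪≫ₗ Submodule.comapSubtypeEquivOfLe (inf_le_inf_left L hUV)
  -- numerical identities
  have eq1 : Module.finrank k ↥(LinearMap.range g) + Module.finrank k ↥(L ⊓ U)
      = Module.finrank k ↥(L ⊓ Vp) := by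
    rw [← ekg.finrank_eq]
    exact LinearMap.finrank_range_add_finrank_ker g
  have eq2 : Module.finrank k (V ⧸ (L ⊔ Vp)) + Module.finrank k ↥(LinearMap.range f)
      = Module.finrank k (V ⧸ (L ⊔ U)) := by
    rw [← e2.finrank_eq]
    exact Submodule.finrank_quotient_add_finrank (LinearMap.range f)
  have eq3 : Module.finrank k ↥(LinearMap.range f) + Module.finrank k ↥(LinearMap.range g)
      = Module.finrank k (↥Vp ⧸ U') := by
    rw [← e3.finrank_eq]
    exact Submodule.finrank_quotient_add_finrank (LinearMap.range g)
  omega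

lemma aux_fd_comm {k V : Type*} [Field k] [AddCommGroup V] [Module k V]
    (Vp Wp X : Submodule k V) (hX : X ≤ Vp ⊔ Wp)
    (hcomm : SubspaceCommensurable Vp Wp) :
    FiniteDimensional k (↥X ⧸ Submodule.comap X.subtype (Vp ⊓ Wp)) := by
  haveI : FiniteDimensional k
      (↥(Vp ⊔ Wp) ⧸ Submodule.comap (Vp ⊔ Wp).subtype (Vp ⊓ Wp)) := hcomm
  set D := Submodule.comap (Vp ⊔ Wp).subtype (Vp ⊓ Wp) with hD
  set h : ↥X →ₗ[k] ↥(Vp ⊔ Wp) ⧸ D :=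
    D.mkQ ∘ₗ Submodule.inclusion hX with hh
  have hker : LinearMap.ker h = Submodule.comap X.subtype (Vp ⊓ Wp) := by
    ext x
    simp [hh, LinearMap.mem_ker, Submodule.Quotient.mk_eq_zero, hD]
  haveI : FiniteDimensional k ↥(LinearMap.range h) :=
    FiniteDimensional.finiteDimensional_submodule _
  exact Module.Finite.equiv
    ((Submodule.quotEquivOfEq _ _ hker.symm ≪≫ₗ h.quotKerEquivRange).symm)


/-- For a subspace `L` discrete with respect to two commensurable open subspaces
`V⁺` and `W⁺`, the indices `i_{V⁺}(L) = dim(L ∩ V⁺) − dim(V/(L + V⁺))` and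
`i_{W⁺}(L)` differ by `dim(W⁺/(V⁺ ∩ W⁺)) − dim(V⁺/(V⁺ ∩ W⁺))`, a constant which
does not depend on `L`. -/
theorem stmt_6 {k V : Type*} [Field k] [AddCommGroup V] [Module k V]
    (Vp Wp L : Submodule k V) (hcomm : SubspaceCommensurable Vp Wp)
    (hLV1 : FiniteDimensional k ↥(L ⊓ Vp))
    (hLV2 : FiniteDimensional k (V ⧸ (L ⊔ Vp)))
    (hLW1 : FiniteDimensional k ↥(L ⊓ Wp))
    (hLW2 : FiniteDimensional k (V ⧸ (L ⊔ Wp))) :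
    ((Module.finrank k ↥(L ⊓ Wp) : ℤ) - Module.finrank k (V ⧸ (L ⊔ Wp)))
      - ((Module.finrank k ↥(L ⊓ Vp) : ℤ) - Module.finrank k (V ⧸ (L ⊔ Vp)))
    = (Module.finrank k (↥Wp ⧸ Submodule.comap Wp.subtype (Vp ⊓ Wp)) : ℤ)
      - Module.finrank k (↥Vp ⧸ Submodule.comap Vp.subtype (Vp ⊓ Wp)) := by
  have hfinV := aux_fd_comm Vp Wp Vp le_sup_left hcomm
  have hfinW := aux_fd_comm Vp Wp Wp le_sup_right hcomm
  have h1' : FiniteDimensional k ↥(L ⊓ (Vp ⊓ Wp)) := by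
    haveI := hLV1
    exact Submodule.finiteDimensional_of_le (inf_le_inf_left L inf_le_left)
  have h2' : FiniteDimensional k (V ⧸ (L ⊔ (Vp ⊓ Wp))) :=
    aux_fd_quot_sup (Vp ⊓ Wp) Vp L inf_le_left hfinV hLV2
  have hV := aux_core (Vp ⊓ Wp) Vp L inf_le_left hfinV hLV1 hLV2 h1' h2'
  have hW := aux_core (Vp ⊓ Wp) Wp L inf_le_right hfinW hLW1 hLW2 h1' h2'
  omega
end

section
/- Let V⁺ ⊂ V be k-vector spaces with V⁺ of countable codimension, and let L, L′ be discrete subspaces of V (with respect to the commensurability class of V⁺) with L ⊆ L′. If they have the same index, i.e. dim(L∩V⁺) − dim(V/(L+V⁺)) = dim(L′∩V⁺) − dim(V/(L′+V⁺)), then L = L′. -/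
/-- Let `V⁺ ⊆ V` with `V⁺` of countable codimension, and let `L ⊆ L′` be discrete
subspaces of `V` (i.e. `L ∩ V⁺` and `V/(L + V⁺)` finite-dimensional, same for `L′`).
If `L` and `L′` have the same index
`i(L) = dim(L ∩ V⁺) − dim(V/(L + V⁺))`, then `L = L′`. -/
theorem stmt_14 {k V : Type*} [Field k] [AddCommGroup V] [Module k V]
    (Vp : Submodule k V) (hcodim : Module.rank k (V ⧸ Vp) ≤ Cardinal.aleph0)
    (L L' : Submodule k V) (hle : L ≤ L')
    (hL1 : FiniteDimensional k ↥(L ⊓ Vp))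
    (hL2 : FiniteDimensional k (V ⧸ (L ⊔ Vp)))
    (hL'1 : FiniteDimensional k ↥(L' ⊓ Vp))
    (hL'2 : FiniteDimensional k (V ⧸ (L' ⊔ Vp)))
    (hind : (Module.finrank k ↥(L ⊓ Vp) : ℤ) - Module.finrank k (V ⧸ (L ⊔ Vp))
      = (Module.finrank k ↥(L' ⊓ Vp) : ℤ) - Module.finrank k (V ⧸ (L' ⊔ Vp))) :
    L = L' := by
  have hinf_le : L ⊓ Vp ≤ L' ⊓ Vp := inf_le_inf_right Vp hle
  have hsup_le : L ⊔ Vp ≤ L' ⊔ Vp := sup_le_sup_right hle Vp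
  -- the quotient map V⧸(L⊔Vp) → V⧸(L'⊔Vp)
  let f : (V ⧸ (L ⊔ Vp)) →ₗ[k] (V ⧸ (L' ⊔ Vp)) :=
    Submodule.mapQ (L ⊔ Vp) (L' ⊔ Vp) LinearMap.id (by simpa using hsup_le)
  have hf_surj : Function.Surjective f := by
    intro x
    obtain ⟨v, rfl⟩ := Submodule.mkQ_surjective (L' ⊔ Vp) x
    exact ⟨Submodule.mkQ (L ⊔ Vp) v, rfl⟩
  -- finrank inequalities
  have h1 : Module.finrank k ↥(L ⊓ Vp) ≤ Module.finrank k ↥(L' ⊓ Vp) :=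
    Submodule.finrank_mono hinf_le
  have h2 : Module.finrank k (V ⧸ (L' ⊔ Vp)) ≤ Module.finrank k (V ⧸ (L ⊔ Vp)) := by
    have := LinearMap.finrank_range_le f
    rwa [LinearMap.range_eq_top.mpr hf_surj, finrank_top] at this
  have e1 : Module.finrank k ↥(L ⊓ Vp) = Module.finrank k ↥(L' ⊓ Vp) := by omega
  have e2 : Module.finrank k (V ⧸ (L ⊔ Vp)) = Module.finrank k (V ⧸ (L' ⊔ Vp)) := by omega
  -- intersections with Vp agree
  have hinf : L ⊓ Vp = L' ⊓ Vp := Submodule.eq_of_le_of_finrank_eq hinf_le e1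
  -- sups with Vp agree
  have hf_inj : Function.Injective f :=
    ((LinearMap.injective_iff_surjective_of_finrank_eq_finrank e2).mpr hf_surj)
  have hsup : L ⊔ Vp = L' ⊔ Vp := by
    refine le_antisymm hsup_le ?_
    intro x hx
    have : f (Submodule.mkQ (L ⊔ Vp) x) = 0 := by
      simpa [f, Submodule.mapQ_apply] using (Submodule.Quotient.mk_eq_zero _).mpr hx
    have : Submodule.mkQ (L ⊔ Vp) x = 0 := hf_inj (by simpa using this)
    exact (Submodule.Quotient.mk_eq_zero _).mp this
  -- modularity
  exact eq_of_le_of_inf_le_of_sup_le hle (le_of_eq hinf.symm) (le_of_eq hsup.symm)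
end

section
/- For discrete subspaces L ⊆ L′ of V with respect to V⁺, the quotient L′/L is finite-dimensional over k, and dim_k(L′/L) = i(L′) − i(L), where i denotes the index relative to V⁺. -/
/-- For discrete subspaces `L ⊆ L′` of `V` with respect to a fixed subspace `V⁺`
(discrete meaning `L ∩ V⁺` and `V/(L + V⁺)` are finite-dimensional), the quotient
`L′/L` is finite-dimensional and
`dim(L′/L) = i(L′) − i(L)`, where `i(L) = dim(L ∩ V⁺) − dim(V/(L + V⁺))`. -/
theorem stmt_15 {k V : Type*} [Field k] [AddCommGroup V] [Module k V]
    (Vp L L' : Submodule k V) (hle : L ≤ L')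
    (hL1 : FiniteDimensional k ↥(L ⊓ Vp))
    (hL2 : FiniteDimensional k (V ⧸ (L ⊔ Vp)))
    (hL'1 : FiniteDimensional k ↥(L' ⊓ Vp))
    (hL'2 : FiniteDimensional k (V ⧸ (L' ⊔ Vp))) :
    FiniteDimensional k (↥L' ⧸ Submodule.comap L'.subtype L) ∧
    (Module.finrank k (↥L' ⧸ Submodule.comap L'.subtype L) : ℤ)
      = ((Module.finrank k ↥(L' ⊓ Vp) : ℤ) - Module.finrank k (V ⧸ (L' ⊔ Vp)))
        - ((Module.finrank k ↥(L ⊓ Vp) : ℤ) - Module.finrank k (V ⧸ (L ⊔ Vp))) := by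
  classical
  set Lc : Submodule k ↥L' := Submodule.comap L'.subtype L with hLc
  set K : Submodule k ↥L' := Submodule.comap L'.subtype (L ⊔ Vp) with hK
  have hLcK : Lc ≤ K := Submodule.comap_mono le_sup_left
  -- the map f : L' → V/(L ⊔ Vp)
  set f : ↥L' →ₗ[k] V ⧸ (L ⊔ Vp) := (L ⊔ Vp).mkQ ∘ₗ L'.subtype with hf
  have hkerf : LinearMap.ker f = K := by
    ext x
    simp [hf, hK, Submodule.Quotient.mk_eq_zero]
  -- range of f is the image of L' ⊔ Vp in V/(L ⊔ Vp)
  have hrangef : LinearMap.range f = Submodule.map (L ⊔ Vp).mkQ (L' ⊔ Vp) := by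
    rw [hf, LinearMap.range_comp, Submodule.range_subtype, Submodule.map_sup]
    have : Submodule.map (L ⊔ Vp).mkQ Vp = ⊥ := by
      rw [← le_bot_iff, ← (L ⊔ Vp).mkQ_map_self]
      exact Submodule.map_mono le_sup_right
    rw [this, sup_bot_eq]
  have e1 : (↥L' ⧸ K) ≃ₗ[k] LinearMap.range f :=
    (Submodule.quotEquivOfEq _ _ hkerf.symm).trans f.quotKerEquivRange
  have hsup : L ⊔ Vp ≤ L' ⊔ Vp := sup_le_sup_right hle Vp
  have e2 : ((V ⧸ (L ⊔ Vp)) ⧸ (Submodule.map (L ⊔ Vp).mkQ (L' ⊔ Vp))) ≃ₗ[k]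
      V ⧸ (L' ⊔ Vp) := Submodule.quotientQuotientEquivQuotient _ _ hsup
  -- the map g : L' ⊓ Vp → L'/L
  set g : ↥(L' ⊓ Vp) →ₗ[k] ↥L' ⧸ Lc := Lc.mkQ ∘ₗ Submodule.inclusion inf_le_left with hg
  have hkerg : LinearMap.ker g
      = Submodule.comap (L' ⊓ Vp).subtype (L ⊓ (L' ⊓ Vp)) := by
    ext x
    simp only [hg, LinearMap.mem_ker, LinearMap.comp_apply, Submodule.mkQ_apply,
      Submodule.Quotient.mk_eq_zero, Submodule.mem_comap, Submodule.mem_inf]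
    constructor
    · intro h; exact ⟨h, x.2⟩
    · intro h; exact h.1
  have hinf : L ⊓ (L' ⊓ Vp) = L ⊓ Vp := by
    rw [← inf_assoc, inf_eq_left.2 hle]
  have ekerg : (LinearMap.ker g) ≃ₗ[k] ↥(L ⊓ Vp) := by
    rw [hkerg, hinf]
    exact Submodule.comapSubtypeEquivOfLe (by rw [← hinf]; exact inf_le_right)
  -- range of g is the image of K in L'/L, by the modular law
  have hrangeg : LinearMap.range g = Submodule.map Lc.mkQ K := by
    apply le_antisymm
    · rintro _ ⟨x, rfl⟩
      exact ⟨Submodule.inclusion inf_le_left x,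
        Submodule.mem_comap.mpr (Submodule.mem_sup_right x.2.2), rfl⟩
    · rintro _ ⟨x, hx, rfl⟩
      have hx' : (x : V) ∈ L ⊔ L' ⊓ Vp := by
        have : (x : V) ∈ L' ⊓ (L ⊔ Vp) := ⟨x.2, hx⟩
        rwa [inf_comm L' (L ⊔ Vp), sup_inf_assoc_of_le _ hle, inf_comm Vp L'] at this
      obtain ⟨a, ha, b, hb, hab⟩ := Submodule.mem_sup.mp hx'
      refine ⟨⟨b, hb⟩, ?_⟩
      simp only [hg, LinearMap.comp_apply, Submodule.mkQ_apply]
      rw [Submodule.Quotient.eq]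
      have : ((Submodule.inclusion (inf_le_left : L' ⊓ Vp ≤ L') ⟨b, hb⟩ : ↥L') : V)
          - (x : V) = -a := by
        simp [Submodule.coe_inclusion, ← hab]
      show (Submodule.inclusion _ ⟨b, hb⟩ : ↥L') - x ∈ Lc
      rw [hLc, Submodule.mem_comap]
      show ((Submodule.inclusion _ ⟨b, hb⟩ : ↥L') : V) - (x : V) ∈ L
      rw [this]
      exact neg_mem ha
  have erg : (↥(L' ⊓ Vp) ⧸ LinearMap.ker g) ≃ₗ[k] Submodule.map Lc.mkQ K :=
    g.quotKerEquivRange.trans (LinearEquiv.ofEq _ _ hrangeg)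
  -- finite dimensionality
  have fdP : FiniteDimensional k ↥(Submodule.map Lc.mkQ K) :=
    Module.Finite.equiv erg
  have fdLK : FiniteDimensional k (↥L' ⧸ K) := Module.Finite.equiv e1.symm
  have e3 : ((↥L' ⧸ Lc) ⧸ Submodule.map Lc.mkQ K) ≃ₗ[k] (↥L' ⧸ K) :=
    Submodule.quotientQuotientEquivQuotient Lc K hLcK
  have fdQP : FiniteDimensional k ((↥L' ⧸ Lc) ⧸ Submodule.map Lc.mkQ K) :=
    Module.Finite.equiv e3.symm
  have fdW : FiniteDimensional k (↥L' ⧸ Lc) := by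
    rw [FiniteDimensional, ← Module.rank_lt_aleph0_iff]
    have h := Submodule.rank_quotient_add_rank (M := ↥L' ⧸ Lc) (Submodule.map Lc.mkQ K)
    rw [← h]
    exact Cardinal.add_lt_aleph0 (Module.rank_lt_aleph0 k _) (Module.rank_lt_aleph0 k _)
  refine ⟨fdW, ?_⟩
  -- now the dimension count
  have a1 : Module.finrank k ((↥L' ⧸ Lc) ⧸ Submodule.map Lc.mkQ K)
      + Module.finrank k ↥(Submodule.map Lc.mkQ K) = Module.finrank k (↥L' ⧸ Lc) :=
    Submodule.finrank_quotient_add_finrank _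
  have a2 : Module.finrank k ((↥L' ⧸ Lc) ⧸ Submodule.map Lc.mkQ K)
      = Module.finrank k (↥L' ⧸ K) := e3.finrank_eq
  have a3 : Module.finrank k (↥L' ⧸ K) = Module.finrank k ↥(LinearMap.range f) :=
    e1.finrank_eq
  have a4 : Module.finrank k ((V ⧸ (L ⊔ Vp)) ⧸ (Submodule.map (L ⊔ Vp).mkQ (L' ⊔ Vp)))
      + Module.finrank k ↥(Submodule.map (L ⊔ Vp).mkQ (L' ⊔ Vp))
      = Module.finrank k (V ⧸ (L ⊔ Vp)) := Submodule.finrank_quotient_add_finrank _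
  have a5 : Module.finrank k ((V ⧸ (L ⊔ Vp)) ⧸ (Submodule.map (L ⊔ Vp).mkQ (L' ⊔ Vp)))
      = Module.finrank k (V ⧸ (L' ⊔ Vp)) := e2.finrank_eq
  have a6 : Module.finrank k ↥(LinearMap.range f)
      = Module.finrank k ↥(Submodule.map (L ⊔ Vp).mkQ (L' ⊔ Vp)) := by rw [hrangef]
  have a7 : Module.finrank k ↥(Submodule.map Lc.mkQ K)
      + Module.finrank k ↥(LinearMap.ker g) = Module.finrank k ↥(L' ⊓ Vp) := by
    have := Submodule.finrank_quotient_add_finrank (M := ↥(L' ⊓ Vp)) (LinearMap.ker g)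
    rw [erg.finrank_eq] at this
    exact this
  have a8 : Module.finrank k ↥(LinearMap.ker g) = Module.finrank k ↥(L ⊓ Vp) :=
    ekerg.finrank_eq
  push_cast
  omega
end
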